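/- Let P = (p_{ij}) be an irreducible stochastic matrix on a finite state space S, set D = I − P, and for each directed cycle c = (i_1, …, i_s) of pairwise distinct states define the circulation w_c = p_{i_1 i_2} ⋯ p_{i_s i_1} · D({i_1, …, i_s}ᶜ) / Σ_{j ∈ S} D({j}ᶜ). Then for every directed cycle c with reversed cycle c₋: w_c · (p_{i_1 i_s} p_{i_s i_{s-1}} ⋯ p_{i_2 i_1}) = w_{c₋} · (p_{i_1 i_2} p_{i_2 i_3} ⋯ p_{i_s i_1}). Consequently, if the product of transition probabilities along c is strictly larger than along c₋ and w_{c₋} > 0, then the net circulation w_c − w_{c₋} is strictly positive. -/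

import Mathlib

/-!
The circulation `w_c` is the cycle weight `∏ p` along `c` times the factor
`D(supp cᶜ) / ∑ⱼ D({j}ᶜ)`, which depends only on the set of states visited by `c`. A cycle
and its reversal visit the same states, so the two circulations are proportional to their
cycle weights. If `w_{c₋} > 0`, the common factor is positive because cycle weights are
nonnegative, and the net circulation is that factor times the positive weight difference.
-/

open scoped Classical

/-- A directed cycle `(i_0, …, i_len)` of pairwise distinct states in the state space
`Fin N`, understood cyclically. -/
structure MCycle (N : ℕ) where
  len : ℕ
  f : Fin (len + 1) → Fin N
  inj : Function.Injective f

/-- The reversed cycle `c₋` of a directed cycle `c = (i_1, i_2, …, i_s)`,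
namely `(i_1, i_s, i_{s-1}, …, i_2)`, traversing `c` backwards. -/
def MCycle.reverse {N : ℕ} (c : MCycle N) : MCycle N :=
  ⟨c.len, fun l => c.f (-l), c.inj.comp neg_injective⟩

/-- The product of transition probabilities along the directed cycle `c`:
`p_{i_1 i_2} p_{i_2 i_3} ⋯ p_{i_s i_1}`. -/
noncomputable def prodAlong {N : ℕ} (P : Matrix (Fin N) (Fin N) ℝ) (c : MCycle N) : ℝ :=
  ∏ l, P (c.f l) (c.f (l + 1))

/-- `subdet D H` is the determinant of the principal submatrix of `D` with rows and
columns indexed by the subset `H` (with `subdet D ∅ = 1`). -/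
noncomputable def subdet {N : ℕ} (D : Matrix (Fin N) (Fin N) ℝ) (H : Finset (Fin N)) : ℝ :=
  (D.submatrix (fun x : H => (x : Fin N)) (fun x : H => (x : Fin N))).det

/-- The circulation of the directed cycle `c = (i_1, …, i_s)`:
`w_c = p_{i_1 i_2} ⋯ p_{i_s i_1} · D({i_1, …, i_s}ᶜ) / ∑_{j} D({j}ᶜ)`, where `D = 1 − P`. -/
noncomputable def circulation {N : ℕ} (P : Matrix (Fin N) (Fin N) ℝ) (c : MCycle N) : ℝ :=
  prodAlong P c * subdet (1 - P) ((Finset.univ.image c.f)ᶜ)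
    / ∑ j, subdet (1 - P) ({j}ᶜ)

namespace MCycle

variable {N : ℕ}

def support (c : MCycle N) : Finset (Fin N) :=
  Finset.univ.image c.f

theorem support_reverse (c : MCycle N) : c.reverse.support = c.support := by
  ext x
  simp only [support, Finset.mem_image, reverse]
  exact ⟨fun ⟨l, _, h⟩ => ⟨-l, Finset.mem_univ _, h⟩,
    fun ⟨l, _, h⟩ => ⟨-l, Finset.mem_univ _, by rwa [neg_neg]⟩⟩

end MCycle

section

variable {N : ℕ} (P : Matrix (Fin N) (Fin N) ℝ)

theorem prodAlong_nonneg (hnn : ∀ i j, 0 ≤ P i j) (c : MCycle N) : 0 ≤ prodAlong P c :=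
  Finset.prod_nonneg fun _ _ => hnn _ _

theorem circulation_eq_prodAlong_mul (c : MCycle N) :
    circulation P c =
      prodAlong P c * (subdet (1 - P) c.supportᶜ / ∑ j, subdet (1 - P) {j}ᶜ) :=
  mul_div_assoc _ _ _

theorem circulation_mul_prodAlong_comm {c d : MCycle N} (h : c.support = d.support) :
    circulation P c * prodAlong P d = circulation P d * prodAlong P c := by
  rw [circulation_eq_prodAlong_mul, circulation_eq_prodAlong_mul, h]
  ring

end

theorem circulation_reversal_general
    {N : ℕ} (P : Matrix (Fin N) (Fin N) ℝ)
    (hnn : ∀ i j, 0 ≤ P i j)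
    (c : MCycle N) :
    circulation P c * prodAlong P c.reverse
        = circulation P c.reverse * prodAlong P c ∧
    (prodAlong P c.reverse < prodAlong P c → 0 < circulation P c.reverse →
      0 < circulation P c - circulation P c.reverse) := by
  refine ⟨circulation_mul_prodAlong_comm P c.support_reverse.symm, fun hlt hpos => ?_⟩
  rw [circulation_eq_prodAlong_mul P c.reverse, c.support_reverse] at hpos
  rw [circulation_eq_prodAlong_mul, circulation_eq_prodAlong_mul P c.reverse,
    c.support_reverse, ← sub_mul]
  exact mul_pos (sub_pos.mpr hlt) (pos_of_mul_pos_right hpos (prodAlong_nonneg P hnn _))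

/-- **Circulations of a cycle and its reversal.**  For an irreducible stochastic matrix
`P` on `Fin N` with circulations `w_c` given by the determinant formula, every directed
cycle `c` with reversed cycle `c₋` satisfies
`w_c · (p_{i_1 i_s} p_{i_s i_{s-1}} ⋯ p_{i_2 i_1}) = w_{c₋} · (p_{i_1 i_2} ⋯ p_{i_s i_1})`.
Consequently, if the product of transition probabilities along `c` is strictly larger
than along `c₋` and `w_{c₋} > 0`, then the net circulation `w_c − w_{c₋}` is strictly
positive. -/
theorem circulation_reversal
    {N : ℕ} (hN : 0 < N) (P : Matrix (Fin N) (Fin N) ℝ)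
    (hnn : ∀ i j, 0 ≤ P i j) (hrow : ∀ i, ∑ j, P i j = 1)
    (hirr : ∀ i j, ∃ n, 1 ≤ n ∧ 0 < (P ^ n) i j)
    (c : MCycle N) :
    circulation P c * prodAlong P c.reverse
        = circulation P c.reverse * prodAlong P c ∧
    (prodAlong P c.reverse < prodAlong P c → 0 < circulation P c.reverse →
      0 < circulation P c - circulation P c.reverse) :=
  circulation_reversal_general P hnn c
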